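/- arXiv:1501.07460 — 5 statements merged into one kernel-verified Lean document; each statement's English description precedes it below -/
import Mathlib

section
/- Let G be a connected multigraph and define m(G) to be the maximum size of a collection of pairwise disjoint pairs of adjacent edges of G whose removal leaves a connected spanning subgraph. If e is an edge of G such that G − e is connected, then m(G) − 1 ≤ m(G − e) ≤ m(G). -/
/-- Two edges of a multigraph (given by its endpoint map `ends`) form a pair of
adjacent edges: they are distinct and share an endpoint. -/
def AdjPair {V E : Type} (ends : E → Sym2 V) (e f : E) : Prop :=
  e ≠ f ∧ ∃ x, x ∈ ends e ∧ x ∈ ends f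

/-- Reachability between vertices using only edges in `S`. -/
def reachOn {V E : Type} (ends : E → Sym2 V) (S : Set E) (a b : V) : Prop :=
  Relation.ReflTransGen (fun x y => ∃ e ∈ S, ends e = s(x, y)) a b

/-- The spanning subgraph with edge set `S` is connected (all vertices mutually reachable). -/
def ConnOn {V E : Type} (ends : E → Sym2 V) (S : Set E) : Prop :=
  ∀ a b : V, reachOn ends S a b

/-- The edges of `S` remaining after deleting all edges occurring in the pair set `P`. -/
def PairsRemoved {E : Type} (S : Set E) (P : Finset (E × E)) : Set E :=
  {x ∈ S | ∀ p ∈ P, x ≠ p.1 ∧ x ≠ p.2}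

/-- `P` is a set of pairwise disjoint pairs of adjacent edges of the (spanning) subgraph
with edge set `S` whose removal leaves a connected spanning subgraph. -/
def ValidOn {V E : Type} (ends : E → Sym2 V) (S : Set E) (P : Finset (E × E)) : Prop :=
  (∀ p ∈ P, p.1 ∈ S ∧ p.2 ∈ S ∧ AdjPair ends p.1 p.2) ∧
  (∀ p ∈ P, ∀ q ∈ P, p ≠ q → p.1 ≠ q.1 ∧ p.1 ≠ q.2 ∧ p.2 ≠ q.1 ∧ p.2 ≠ q.2) ∧
  ConnOn ends (PairsRemoved S P)

/-- `m` of the subgraph with edge set `S`: the maximum number of pairwise disjoint pairs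
of adjacent edges whose removal leaves a connected spanning subgraph. -/
noncomputable def maxPairsOn {V E : Type} (ends : E → Sym2 V) (S : Set E) : ℕ :=
  sSup {k | ∃ P : Finset (E × E), ValidOn ends S P ∧ P.card = k}

/-- A cycle (closed walk with no repeated vertices or edges; length 1 = loop,
length 2 = pair of parallel edges) using only edges from `S`. -/
structure CycleIn {V E : Type} (ends : E → Sym2 V) (S : Set E) where
  n : ℕ
  npos : 0 < n
  v : ZMod n → V
  e : ZMod n → E
  vinj : Function.Injective v
  einj : Function.Injective e
  mem : ∀ i, e i ∈ S
  incid : ∀ i, ends (e i) = s(v i, v (i + 1))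

/-- The number of connected components of the spanning subgraph with edge set `S`
containing an odd number of edges. -/
noncomputable def oddComp {V E : Type} (ends : E → Sym2 V) (S : Set E) : ℕ :=
  Nat.card {c : Quot (reachOn ends S) //
    Odd (Nat.card {e : E // e ∈ S ∧ ∀ x ∈ ends e, Quot.mk (reachOn ends S) x = c})}

section Helpers

variable {V E : Type}

lemma reachOn_mono (ends : E → Sym2 V) {S T : Set E} (h : S ⊆ T) {a b : V}
    (hr : reachOn ends S a b) : reachOn ends T a b :=
  Relation.ReflTransGen.mono (p := fun x y => ∃ e ∈ T, ends e = s(x, y))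
    (fun x y ⟨g, hg, hgs⟩ => ⟨g, h hg, hgs⟩) _ _ hr

lemma reachOn_symm (ends : E → Sym2 V) {S : Set E} {a b : V}
    (hr : reachOn ends S a b) : reachOn ends S b a := by
  refine @Std.Symm.symm _ _ (@Relation.ReflTransGen.stdSymm _ _ ⟨?_⟩) _ _ hr
  rintro x y ⟨g, hg, hgs⟩
  exact ⟨g, hg, by rw [hgs, Sym2.eq_swap]⟩

lemma reachOn_trans (ends : E → Sym2 V) {S : Set E} {a b c : V}
    (h1 : reachOn ends S a b) (h2 : reachOn ends S b c) : reachOn ends S a c :=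
  Relation.ReflTransGen.trans h1 h2

lemma connOn_mono (ends : E → Sym2 V) {S T : Set E} (h : S ⊆ T) (hc : ConnOn ends S) :
    ConnOn ends T := fun a b => reachOn_mono ends h (hc a b)

lemma validOn_empty (ends : E → Sym2 V) {S : Set E} (hc : ConnOn ends S) :
    ValidOn ends S (∅ : Finset (E × E)) := by
  refine ⟨by simp, by simp, ?_⟩
  have h : PairsRemoved S (∅ : Finset (E × E)) = S := by
    ext x; simp [PairsRemoved]
  rwa [h]

lemma bddAbove_maxSet [Fintype E] (ends : E → Sym2 V) (S : Set E) :
    BddAbove {k | ∃ P : Finset (E × E), ValidOn ends S P ∧ P.card = k} := by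
  refine ⟨Fintype.card (E × E), ?_⟩
  rintro k ⟨P, -, rfl⟩
  exact Finset.card_le_univ P

/-- Key step: from a valid pair set on the whole graph, produce one on `G - e`
losing at most one pair. -/
lemma key_step (ends : E → Sym2 V) (e : E)
    (hGe : ConnOn ends {x | x ≠ e}) (P : Finset (E × E))
    (hP : ValidOn ends Set.univ P) :
    ∃ P' : Finset (E × E), ValidOn ends {x | x ≠ e} P' ∧ P.card ≤ P'.card + 1 := by
  classical
  by_cases hA : ∃ p ∈ P, p.1 = e ∨ p.2 = e
  · -- e occurs in some pair p : drop that pair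
    obtain ⟨p, hp, hpe⟩ := hA
    refine ⟨P.erase p, ⟨?_, ?_, ?_⟩, ?_⟩
    · intro q hq
      have hq' := Finset.mem_of_mem_erase hq
      have hne : q ≠ p := Finset.ne_of_mem_erase hq
      obtain ⟨h1, h2, h3, h4⟩ := hP.2.1 q hq' p hp hne
      refine ⟨?_, ?_, (hP.1 q hq').2.2⟩
      · show q.1 ≠ e
        rcases hpe with h | h
        · rw [← h]; exact h1
        · rw [← h]; exact h2
      · show q.2 ≠ e
        rcases hpe with h | h
        · rw [← h]; exact h3
        · rw [← h]; exact h4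
    · intro q hq r hr hne
      exact hP.2.1 q (Finset.mem_of_mem_erase hq) r (Finset.mem_of_mem_erase hr) hne
    · refine connOn_mono ends ?_ hP.2.2
      rintro x ⟨-, hall⟩
      have hxe : x ≠ e := by
        rcases hpe with h | h
        · rw [← h]; exact (hall p hp).1
        · rw [← h]; exact (hall p hp).2
      exact ⟨hxe, fun q hq => hall q (Finset.mem_of_mem_erase hq)⟩
    · have h1 : 0 < P.card := Finset.card_pos.mpr ⟨p, hp⟩
      rw [Finset.card_erase_of_mem hp]
      omega
  · -- e occurs in no pair
    push_neg at hA
    -- hA : ∀ p ∈ P, p.1 ≠ e ∧ p.2 ≠ e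
    obtain ⟨u, v, huv⟩ : ∃ u v, s(u, v) = ends e := by
      induction ends e using Sym2.ind with
      | _ a b => exact ⟨a, b, rfl⟩
    set H : Set E := PairsRemoved Set.univ P with hH
    set S0 : Set E := {x | x ∈ H ∧ x ≠ e} with hS0
    have hconnH : ConnOn ends H := hP.2.2
    -- every vertex reaches u or v in H - e
    have claim1 : ∀ a, reachOn ends S0 u a ∨ reachOn ends S0 v a := by
      intro a
      have h : Relation.ReflTransGen (fun x y => ∃ g ∈ H, ends g = s(x, y)) u a :=
        hconnH u a
      induction h with
      | refl => exact Or.inl Relation.ReflTransGen.refl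
      | @tail b c hub hstep ih =>
        obtain ⟨g, hgH, hgends⟩ := hstep
        by_cases hge : g = e
        · subst hge
          have heq : s(u, v) = s(b, c) := huv.trans hgends
          rcases Sym2.eq_iff.mp heq with ⟨h1, h2⟩ | ⟨h1, h2⟩
          · subst h2; exact Or.inr Relation.ReflTransGen.refl
          · subst h1; exact Or.inl Relation.ReflTransGen.refl
        · have hstep' : reachOn ends S0 b c :=
            Relation.ReflTransGen.single ⟨g, ⟨hgH, hge⟩, hgends⟩
          rcases ih with h | h
          · exact Or.inl (reachOn_trans ends h hstep')
          · exact Or.inr (reachOn_trans ends h hstep')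
    by_cases hRuv : reachOn ends S0 u v
    · -- H - e is still connected : keep all of P
      have haux : ∀ a, reachOn ends S0 u a := fun a =>
        (claim1 a).elim id (fun h => reachOn_trans ends hRuv h)
      have hconnS0 : ConnOn ends S0 := fun a b =>
        reachOn_trans ends (reachOn_symm ends (haux a)) (haux b)
      refine ⟨P, ⟨?_, hP.2.1, ?_⟩, Nat.le_succ _⟩
      · intro p hp
        exact ⟨(hA p hp).1, (hA p hp).2, (hP.1 p hp).2.2⟩
      · refine connOn_mono ends ?_ hconnS0
        rintro z ⟨⟨-, hall⟩, hze⟩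
        exact ⟨hze, hall⟩
    · -- H - e is disconnected : find a pair-edge crossing the cut
      have key : ∀ b, reachOn ends {x | x ≠ e} u b →
          reachOn ends S0 u b ∨
          ∃ p ∈ P, ∃ f x y, (f = p.1 ∨ f = p.2) ∧ ends f = s(x, y) ∧
            ¬ reachOn ends S0 x y := by
        intro b hb
        have hb' : Relation.ReflTransGen
            (fun x y => ∃ g ∈ {x : E | x ≠ e}, ends g = s(x, y)) u b := hb
        induction hb' with
        | refl => exact Or.inl Relation.ReflTransGen.refl
        | @tail b c hub hstep ih =>
          rcases ih hub with hreach | found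
          · obtain ⟨g, hge, hgends⟩ := hstep
            by_cases hbc : reachOn ends S0 b c
            · exact Or.inl (reachOn_trans ends hreach hbc)
            · right
              have hgnH : ¬ (∀ p ∈ P, g ≠ p.1 ∧ g ≠ p.2) := by
                intro hall
                exact hbc (Relation.ReflTransGen.single
                  ⟨g, ⟨⟨Set.mem_univ g, hall⟩, hge⟩, hgends⟩)
              have hex : ∃ p ∈ P, g = p.1 ∨ g = p.2 := by
                by_contra hcon
                push_neg at hcon
                exact hgnH hcon
              obtain ⟨p, hp, hor⟩ := hex
              exact ⟨p, hp, g, b, c, hor, hgends, hbc⟩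
          · exact Or.inr found
      rcases key v (hGe u v) with h | ⟨p, hp, f, x, y, hf, hfends, hnxy⟩
      · exact absurd h hRuv
      set T : Set E := PairsRemoved {x | x ≠ e} (P.erase p) with hT
      have hS0T : S0 ⊆ T := by
        rintro z ⟨⟨-, hall⟩, hze⟩
        exact ⟨hze, fun q hq => hall q (Finset.mem_of_mem_erase hq)⟩
      have hfe' : f ≠ e := by
        rcases hf with h | h
        · rw [h]; exact (hA p hp).1
        · rw [h]; exact (hA p hp).2
      have hfT : f ∈ T := by
        refine ⟨hfe', fun q hq => ?_⟩
        have hq' := Finset.mem_of_mem_erase hq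
        have hne : q ≠ p := Finset.ne_of_mem_erase hq
        obtain ⟨h1, h2, h3, h4⟩ := hP.2.1 q hq' p hp hne
        rcases hf with h | h
        · exact ⟨by rw [h]; exact h1.symm, by rw [h]; exact h3.symm⟩
        · exact ⟨by rw [h]; exact h2.symm, by rw [h]; exact h4.symm⟩
      have hxyT : reachOn ends T x y :=
        Relation.ReflTransGen.single ⟨f, hfT, hfends⟩
      have horient : (reachOn ends S0 u x ∧ reachOn ends S0 v y) ∨
          (reachOn ends S0 v x ∧ reachOn ends S0 u y) := by
        rcases claim1 x with hx | hx <;> rcases claim1 y with hy | hy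
        · exact absurd (reachOn_trans ends (reachOn_symm ends hx) hy) hnxy
        · exact Or.inl ⟨hx, hy⟩
        · exact Or.inr ⟨hx, hy⟩
        · exact absurd (reachOn_trans ends (reachOn_symm ends hx) hy) hnxy
      have hTuv : reachOn ends T u v := by
        rcases horient with ⟨h1, h2⟩ | ⟨h1, h2⟩
        · exact reachOn_trans ends
            (reachOn_trans ends (reachOn_mono ends hS0T h1) hxyT)
            (reachOn_symm ends (reachOn_mono ends hS0T h2))
        · exact reachOn_symm ends (reachOn_trans ends
            (reachOn_trans ends (reachOn_mono ends hS0T h1) hxyT)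
            (reachOn_symm ends (reachOn_mono ends hS0T h2)))
      have hauxT : ∀ a, reachOn ends T u a := fun a =>
        (claim1 a).elim (reachOn_mono ends hS0T)
          (fun h => reachOn_trans ends hTuv (reachOn_mono ends hS0T h))
      refine ⟨P.erase p, ⟨?_, ?_, ?_⟩, ?_⟩
      · intro q hq
        have hq' := Finset.mem_of_mem_erase hq
        exact ⟨(hA q hq').1, (hA q hq').2, (hP.1 q hq').2.2⟩
      · intro q hq r hr hne
        exact hP.2.1 q (Finset.mem_of_mem_erase hq) r (Finset.mem_of_mem_erase hr) hne
      · exact fun a b => reachOn_trans ends (reachOn_symm ends (hauxT a)) (hauxT b)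
      · have h1 : 0 < P.card := Finset.card_pos.mpr ⟨p, hp⟩
        rw [Finset.card_erase_of_mem hp]
        omega

end Helpers

/-- deleting a non-disconnecting edge changes `m` by at most one. -/
theorem edge_removal_maxPairs {V E : Type} [Fintype V] [Fintype E]
    (ends : E → Sym2 V) (hG : ConnOn ends Set.univ) (e : E)
    (hGe : ConnOn ends {x | x ≠ e}) :
    maxPairsOn ends Set.univ - 1 ≤ maxPairsOn ends {x | x ≠ e} ∧
    maxPairsOn ends {x | x ≠ e} ≤ maxPairsOn ends Set.univ := by
  constructor
  · rw [tsub_le_iff_right, maxPairsOn]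
    refine csSup_le ⟨0, ∅, validOn_empty ends hG, by simp⟩ ?_
    rintro k ⟨P, hP, rfl⟩
    obtain ⟨P', hP', hcard⟩ := key_step ends e hGe P hP
    have hle : P'.card ≤ maxPairsOn ends {x | x ≠ e} :=
      le_csSup (bddAbove_maxSet ends _) ⟨P', hP', rfl⟩
    omega
  · rw [maxPairsOn]
    refine csSup_le ⟨0, ∅, validOn_empty ends hGe, by simp⟩ ?_
    rintro k ⟨P, hP, rfl⟩
    refine le_csSup (bddAbove_maxSet ends _) ⟨P, ⟨?_, hP.2.1, ?_⟩, rfl⟩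
    · intro p hp
      exact ⟨Set.mem_univ _, Set.mem_univ _, (hP.1 p hp).2.2⟩
    · refine connOn_mono ends ?_ hP.2.2
      rintro z ⟨-, hall⟩
      exact ⟨Set.mem_univ z, hall⟩
end

section
/- Let G be a connected multigraph. If no two distinct cycles of G share a common vertex, then G contains no pair of adjacent edges whose removal leaves a connected spanning subgraph. -/
lemma exists_nodup_chain' {α : Type*} {r : α → α → Prop} {a b : α}
    (h : Relation.ReflTransGen r a b) :
    ∃ m : List α, m.Chain' r ∧ m.head? = some a ∧ m.getLast? = some b ∧ m.Nodup := by
  induction h using Relation.ReflTransGen.head_induction_on with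
  | refl => exact ⟨[b], List.isChain_singleton _, by simp, by simp, by simp⟩
  | @head a c hac _ ih =>
    obtain ⟨m, hchain, hhead, hlast, hnodup⟩ := ih
    by_cases ha : a ∈ m
    · obtain ⟨s, t, rfl⟩ := List.append_of_mem ha
      refine ⟨a :: t, hchain.suffix ⟨s, rfl⟩, rfl, ?_,
        hnodup.sublist (List.sublist_append_right s _)⟩
      rw [List.getLast?_append] at hlast
      rcases Option.or_eq_some_iff.mp hlast with h1 | ⟨h1, _⟩
      · exact h1
      · simp at h1
    · match m, hhead with
      | c :: m', rfl =>
        exact ⟨a :: c :: m', List.isChain_cons_cons.mpr ⟨hac, hchain⟩, rfl, by simpa using hlast,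
          List.nodup_cons.mpr ⟨ha, hnodup⟩⟩

lemma exists_cycle_through {V E : Type} (ends : E → Sym2 V) (S : Set E)
    (e : E) (heS : e ∉ S) (x y : V) (hxy : ends e = s(x, y))
    (h : reachOn ends S y x) :
    ∃ c : CycleIn ends Set.univ, Set.range c.e ⊆ insert e S ∧
      (∃ i, c.v i = x) ∧ (∃ j, c.e j = e) := by
  obtain ⟨m, hchain, hhead, hlast, hnodup⟩ := exists_nodup_chain' h
  set n := m.length with hn
  have hm : m ≠ [] := by rintro rfl; simp at hhead
  have npos : 0 < n := List.length_pos_iff.mpr hm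
  haveI : NeZero n := ⟨npos.ne'⟩
  set v : ZMod n → V := fun i => m.get ⟨i.val, ZMod.val_lt i⟩ with hv
  have hval : ∀ i : ZMod n, (i + 1 : ZMod n).val = (i.val + 1) % n := by
    intro i
    rcases lt_or_ge 1 n with h1 | h1
    · haveI : Fact (1 < n) := ⟨h1⟩
      rw [ZMod.val_add, ZMod.val_one]
    · have hn1 : n = 1 := by omega
      have h2 : ∀ j : ZMod n, j.val = 0 := fun j => by have := ZMod.val_lt j; omega
      rw [h2, h2]; simp [hn1]
  have hvinj : Function.Injective v := by
    intro i j hij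
    rw [hv] at hij
    simp only at hij
    have := (hnodup.get_inj_iff).mp hij
    exact ZMod.val_injective n (by simpa using congrArg Fin.val this)
  have hlast' : m.get ⟨n - 1, by omega⟩ = x := by
    have h2 := List.getLast?_eq_getLast hm
    rw [h2] at hlast
    have h3 := List.getLast_eq_getElem hm
    simp only [Option.some_inj] at hlast
    rw [← hlast, h3]; rfl
  have hhead' : m.get ⟨0, npos⟩ = y := by
    rw [List.get_mk_zero, List.head?_eq_head hm] at *
    simpa using hhead
  have key : ∀ i : ZMod n, ∃ g : E,
      (g ∈ S ∨ g = e) ∧ ends g = s(v i, v (i + 1)) ∧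
      (i.val + 1 < n → g ∈ S) ∧ (¬ (i.val + 1 < n) → g = e) := by
    intro i
    by_cases hi : i.val + 1 < n
    · obtain ⟨g, hgS, hge⟩ := List.isChain_iff_getElem.mp hchain i.val (by omega)
      refine ⟨g, Or.inl hgS, ?_, fun _ => hgS, fun h' => absurd hi h'⟩
      have h4 : (i + 1 : ZMod n).val = i.val + 1 := by
        rw [hval]; exact Nat.mod_eq_of_lt hi
      have hv1 : v (i + 1) = m.get ⟨i.val + 1, by omega⟩ := by
        rw [hv]; simp only; congr 1; exact Fin.ext h4
      rw [hv1, hv]; exact hge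
    · have hi' : i.val = n - 1 := by have := ZMod.val_lt i; omega
      refine ⟨e, Or.inr rfl, ?_, fun h' => absurd h' hi, fun _ => rfl⟩
      have h4 : (i + 1 : ZMod n).val = 0 := by
        rw [hval, hi']
        have : n - 1 + 1 = n := by omega
        rw [this, Nat.mod_self]
      have hvx : v i = x := by
        rw [hv]; simp only; rw [← hlast']; congr 1; exact Fin.ext hi'
      have hvy : v (i + 1) = y := by
        rw [hv]; simp only; rw [← hhead']; congr 1; exact Fin.ext h4
      rw [hvx, hvy, hxy]
  choose ec hec1 hec2 hec3 hec4 using key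
  have heinj : Function.Injective ec := by
    intro i j hij
    by_cases hi : i.val + 1 < n <;> by_cases hj : j.val + 1 < n
    · have h1 : ends (ec i) = ends (ec j) := by rw [hij]
      rw [hec2 i, hec2 j] at h1
      rcases Sym2.eq_iff.mp h1 with ⟨h2, _⟩ | ⟨h2, h3⟩
      · exact hvinj h2
      · exfalso
        have e1 : i = j + 1 := hvinj h2
        have e2 : i + 1 = j := hvinj h3
        have v1 : i.val = (j.val + 1) % n := by rw [e1, hval]
        have v2 : j.val = (i.val + 1) % n := by rw [← e2, hval]
        rw [Nat.mod_eq_of_lt hj] at v1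
        rw [Nat.mod_eq_of_lt hi] at v2
        omega
    · exact absurd (hij ▸ hec3 i hi) (by rw [hec4 j hj]; exact heS)
    · exact absurd (hij ▸ hec3 j hj) (by rw [hec4 i hi]; exact heS)
    · have : i.val = j.val := by
        have := ZMod.val_lt i; have := ZMod.val_lt j; omega
      exact ZMod.val_injective n this
  refine ⟨⟨n, npos, v, ec, hvinj, heinj, fun i => trivial, hec2⟩, ?_, ?_, ?_⟩
  · rintro g ⟨i, rfl⟩
    rcases hec1 i with h1 | h1
    · exact Set.mem_insert_iff.mpr (Or.inr h1)
    · exact h1 ▸ Set.mem_insert e S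
  · refine ⟨((n - 1 : ℕ) : ZMod n), ?_⟩
    show v _ = x
    rw [hv]; simp only; rw [← hlast']; congr 1
    exact Fin.ext (ZMod.val_cast_of_lt (by omega))
  · refine ⟨((n - 1 : ℕ) : ZMod n), ?_⟩
    show ec _ = e
    apply hec4
    rw [ZMod.val_cast_of_lt (by omega : n - 1 < n)]
    omega


/-- if no two distinct cycles of `G` share a vertex, then no pair of
adjacent edges can be removed keeping the graph connected. -/
theorem no_removable_pair_of_cycles_disjoint {V E : Type} [Fintype V] [Fintype E]
    (ends : E → Sym2 V) (hG : ConnOn ends Set.univ)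
    (hcyc : ∀ c c' : CycleIn ends Set.univ,
      Set.range c.e ≠ Set.range c'.e → ∀ i j, c.v i ≠ c'.v j) :
    ∀ e f : E, AdjPair ends e f → ¬ ConnOn ends {x | x ≠ e ∧ x ≠ f} := by
  rintro e f ⟨hef, x, hxe, hxf⟩ hconn
  set S : Set E := {g | g ≠ e ∧ g ≠ f} with hS
  have heS : e ∉ S := fun h => h.1 rfl
  have hfS : f ∉ S := fun h => h.2 rfl
  obtain ⟨c, hcsub, ⟨i, hci⟩, ⟨k, hck⟩⟩ :=
    exists_cycle_through ends S e heS x (Sym2.Mem.other hxe)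
      (Sym2.other_spec hxe).symm (hconn _ x)
  obtain ⟨c', hcsub', ⟨j, hcj⟩, _⟩ :=
    exists_cycle_through ends S f hfS x (Sym2.Mem.other hxf)
      (Sym2.other_spec hxf).symm (hconn _ x)
  have hne : Set.range c.e ≠ Set.range c'.e := by
    intro hr
    have : e ∈ Set.range c'.e := hr ▸ ⟨k, hck⟩
    rcases hcsub' this with h1 | h1
    · exact hef h1
    · exact heS h1
  exact hcyc c c' hne i j (hci.trans hcj.symm)
end

section
/- Let G be a connected multigraph and suppose a greedy process removes disjoint pairs of adjacent edges one at a time, each time keeping the graph connected, until no pair of adjacent edges can be removed without disconnecting the graph. If the process removes k pairs, then m(G) ≤ 2k, where m(G) is the maximum number of disjoint pairs of adjacent edges removable while keeping G connected. -/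
section Aux
variable {V E : Type} (ends : E → Sym2 V)

lemma reach_mono {S T : Set E} (h : S ⊆ T) {a b : V} (hr : reachOn ends S a b) :
    reachOn ends T a b :=
  Relation.ReflTransGen.mono (fun x y (hxy : ∃ e ∈ S, ends e = s(x, y)) =>
    (let ⟨e, he, hx⟩ := hxy; ⟨e, h he, hx⟩ : ∃ e ∈ T, ends e = s(x, y))) a b hr

lemma conn_mono {S T : Set E} (h : S ⊆ T) (hc : ConnOn ends S) : ConnOn ends T :=
  fun a b => reach_mono ends h (hc a b)

lemma reach_symm {S : Set E} {a b : V} (hr : reachOn ends S a b) : reachOn ends S b a := by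
  haveI : Std.Symm (fun x y : V => ∃ e ∈ S, ends e = s(x, y)) := ⟨by
    rintro x y ⟨e, he, hx⟩
    exact ⟨e, he, hx.trans (Sym2.eq_swap)⟩⟩
  exact Relation.ReflTransGen.symmetric.symm _ _ hr

lemma classify {U : Set E} (hU : ConnOn ends U) {x : E} {a b : V}
    (hx : ends x = s(a, b)) (v : V) :
    reachOn ends (U \ {x}) v a ∨ reachOn ends (U \ {x}) v b := by
  have h := hU v a
  induction h using Relation.ReflTransGen.head_induction_on with
  | refl => exact Or.inl Relation.ReflTransGen.refl
  | head hvw _ ih =>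
    rename_i v w _
    obtain ⟨g, hg, hge⟩ := hvw
    by_cases hgx : g = x
    · subst hgx
      rw [hx] at hge
      rcases Sym2.eq_iff.mp hge.symm with ⟨h1, h2⟩ | ⟨h1, h2⟩
      · exact Or.inl (h1 ▸ Relation.ReflTransGen.refl)
      · exact Or.inr (h1 ▸ Relation.ReflTransGen.refl)
    · have hstep : ∃ e ∈ U \ {x}, ends e = s(v, w) := ⟨g, ⟨hg, hgx⟩, hge⟩
      rcases ih with h' | h'
      · exact Or.inl (Relation.ReflTransGen.head hstep h')
      · exact Or.inr (Relation.ReflTransGen.head hstep h')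

end Aux

section Aux2
variable {V E : Type} (ends : E → Sym2 V)

lemma sym2_decomp (z : Sym2 V) : ∃ a b, z = s(a, b) :=
  Sym2.ind (fun a b => ⟨a, b, rfl⟩) z

/-- Lemma B: removing one edge from a connected spanning subgraph can be repaired
by at most one edge of any connected spanning subgraph `W`. -/
lemma fix_one {U W : Set E} (hU : ConnOn ends U) (hW : ConnOn ends W) (x : E) :
    ∃ F : Finset E, F.card ≤ 1 ∧ ↑F ⊆ W ∧ ConnOn ends ((U \ {x}) ∪ ↑F) := by
  classical
  obtain ⟨a, b, hx⟩ := sym2_decomp (ends x)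
  have hclass := classify ends hU hx
  by_cases hab : reachOn ends (U \ {x}) a b
  · refine ⟨∅, by simp, by simp, ?_⟩
    have hconn : ConnOn ends (U \ {x}) := by
      intro u v
      have hu := hclass u
      have hv := hclass v
      have hu' : reachOn ends (U \ {x}) u a := by
        rcases hu with h | h
        · exact h
        · exact h.trans (reach_symm ends hab)
      have hv' : reachOn ends (U \ {x}) v a := by
        rcases hv with h | h
        · exact h
        · exact h.trans (reach_symm ends hab)
      exact hu'.trans (reach_symm ends hv')
    simpa using conn_mono ends (by simp) hconn
  · -- find a crossing edge along a path from a to b in W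
    have key : ∀ v : V, reachOn ends W v b → reachOn ends (U \ {x}) v a →
        ∃ g ∈ W, ∃ u w, ends g = s(u, w) ∧ reachOn ends (U \ {x}) u a ∧
          reachOn ends (U \ {x}) w b := by
      intro v hvb
      induction hvb using Relation.ReflTransGen.head_induction_on with
      | refl => intro hba; exact absurd (reach_symm ends hba) hab
      | head hvw _ ih =>
        rename_i v w _
        intro hva
        obtain ⟨g, hg, hge⟩ := hvw
        rcases hclass w with hwa | hwb
        · exact ih hwa
        · exact ⟨g, hg, v, w, hge, hva, hwb⟩
    obtain ⟨g, hg, u, w, hge, hua, hwb⟩ := key a (hW a b) Relation.ReflTransGen.refl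
    refine ⟨{g}, by simp, by simpa using hg, ?_⟩
    set T : Set E := (U \ {x}) ∪ ↑({g} : Finset E) with hT
    have hsub : U \ {x} ⊆ T := by intro y hy; exact Or.inl hy
    have hguw : reachOn ends T u w :=
      Relation.ReflTransGen.single ⟨g, by simp [hT], hge⟩
    have habT : reachOn ends T a b :=
      ((reach_symm ends (reach_mono ends hsub hua)).trans hguw).trans
        (reach_mono ends hsub hwb)
    intro p q
    have hp := hclass p
    have hq := hclass q
    have hpa : reachOn ends T p a := by
      rcases hp with h | h
      · exact reach_mono ends hsub h
      · exact (reach_mono ends hsub h).trans (reach_symm ends habT)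
    have hqa : reachOn ends T q a := by
      rcases hq with h | h
      · exact reach_mono ends hsub h
      · exact (reach_mono ends hsub h).trans (reach_symm ends habT)
    exact hpa.trans (reach_symm ends hqa)

end Aux2

section Step
variable {V E : Type} (ends : E → Sym2 V)

lemma step_aux {S : Set E} {e₁ e₂ : E} {P : Finset (E × E)}
    (hconn2 : ConnOn ends (S \ {e₁, e₂})) (hV : ValidOn ends S P)
    (horder : (∃ p ∈ P, e₂ = p.1 ∨ e₂ = p.2) → (∃ p ∈ P, e₁ = p.1 ∨ e₁ = p.2)) :
    ∃ P' : Finset (E × E), P' ⊆ P ∧ ValidOn ends (S \ {e₁, e₂}) P' ∧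
      P.card ≤ P'.card + 2 := by
  classical
  obtain ⟨hmem, hdisj, hc⟩ := hV
  set P₀ : Finset (E × E) :=
    P.filter (fun p => ¬(e₁ = p.1 ∨ e₁ = p.2 ∨ e₂ = p.1 ∨ e₂ = p.2)) with hP₀
  set C0 : Set E := PairsRemoved S P₀ with hC0def
  have hPRsub : PairsRemoved S P ⊆ C0 := by
    rintro y ⟨hyS, hy⟩
    exact ⟨hyS, fun p hp => hy p (Finset.filter_subset _ _ hp)⟩
  have hC0 : ConnOn ends C0 := conn_mono ends hPRsub hc
  have main : ∃ F1 F2 : Finset E, ↑F1 ⊆ S \ {e₁, e₂} ∧ ↑F2 ⊆ S \ {e₁, e₂} ∧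
      ConnOn ends ((((C0 \ {e₁}) ∪ ↑F1) \ {e₂}) ∪ ↑F2) ∧
      ∃ T : Finset E, T.card ≤ 2 ∧
        ∀ p ∈ P, ((e₁ = p.1 ∨ e₁ = p.2 ∨ e₂ = p.1 ∨ e₂ = p.2) ∨
          (p.1 ∈ (↑F1 ∪ ↑F2 : Set E) ∨ p.2 ∈ (↑F1 ∪ ↑F2 : Set E))) →
          ∃ t ∈ T, t = p.1 ∨ t = p.2 := by
    by_cases ht₁ : ∃ p ∈ P, e₁ = p.1 ∨ e₁ = p.2
    · -- e₁ is covered by a pair of P, so C0 \ {e₁} is still connected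
      have hU1 : ConnOn ends (C0 \ {e₁}) := by
        refine conn_mono ends ?_ hc
        rintro y ⟨hyS, hy⟩
        refine ⟨hPRsub ⟨hyS, hy⟩, ?_⟩
        simp only [Set.mem_singleton_iff]
        intro hy'; subst hy'
        obtain ⟨p, hp, hpe⟩ := ht₁
        rcases hpe with h | h
        exacts [(hy p hp).1 h, (hy p hp).2 h]
      by_cases ht₂ : ∃ p ∈ P, e₂ = p.1 ∨ e₂ = p.2
      · -- both covered: no repairs needed
        refine ⟨∅, ∅, by simp, by simp, ?_, {e₁, e₂},
          (Finset.card_insert_le _ _).trans (by simp), ?_⟩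
        · refine conn_mono ends ?_ hc
          rintro y ⟨hyS, hy⟩
          have hy1 : y ≠ e₁ := by
            intro hy'; subst hy'
            obtain ⟨p, hp, hpe⟩ := ht₁
            rcases hpe with h | h
            exacts [(hy p hp).1 h, (hy p hp).2 h]
          have hy2 : y ≠ e₂ := by
            intro hy'; subst hy'
            obtain ⟨p, hp, hpe⟩ := ht₂
            rcases hpe with h | h
            exacts [(hy p hp).1 h, (hy p hp).2 h]
          simp only [Finset.coe_empty, Set.union_empty]
          exact ⟨⟨hPRsub ⟨hyS, hy⟩, by simpa using hy1⟩, by simpa using hy2⟩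
        · intro p hp hcond
          rcases hcond with (h | h | h | h) | (h | h)
          · exact ⟨e₁, by simp, Or.inl h⟩
          · exact ⟨e₁, by simp, Or.inr h⟩
          · exact ⟨e₂, by simp, Or.inl h⟩
          · exact ⟨e₂, by simp, Or.inr h⟩
          · simp at h
          · simp at h
      · -- e₂ uncovered: one repair for e₂
        obtain ⟨F2, hF2c, hF2sub, hF2conn⟩ :=
          fix_one ends (conn_mono ends (Set.subset_union_left) hU1 :
            ConnOn ends ((C0 \ {e₁}) ∪ ↑(∅ : Finset E))) hconn2 e₂
        refine ⟨∅, F2, by simp, hF2sub, hF2conn, insert e₁ F2,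
          le_trans (Finset.card_insert_le _ _) (by omega), ?_⟩
        intro p hp hcond
        rcases hcond with (h | h | h | h) | (h | h)
        · exact ⟨e₁, Finset.mem_insert_self _ _, Or.inl h⟩
        · exact ⟨e₁, Finset.mem_insert_self _ _, Or.inr h⟩
        · exact absurd ⟨p, hp, Or.inl h⟩ ht₂
        · exact absurd ⟨p, hp, Or.inr h⟩ ht₂
        · rcases h with h | h
          · simp at h
          · exact ⟨p.1, Finset.mem_insert_of_mem (by exact_mod_cast h), Or.inl rfl⟩
        · rcases h with h | h
          · simp at h
          · exact ⟨p.2, Finset.mem_insert_of_mem (by exact_mod_cast h), Or.inr rfl⟩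
    · -- e₁ uncovered (hence e₂ uncovered): up to two repairs
      have ht₂ : ¬ ∃ p ∈ P, e₂ = p.1 ∨ e₂ = p.2 := fun h => ht₁ (horder h)
      obtain ⟨F1, hF1c, hF1sub, hF1conn⟩ := fix_one ends hC0 hconn2 e₁
      obtain ⟨F2, hF2c, hF2sub, hF2conn⟩ := fix_one ends hF1conn hconn2 e₂
      refine ⟨F1, F2, hF1sub, hF2sub, hF2conn, F1 ∪ F2,
        le_trans (Finset.card_union_le _ _) (by omega), ?_⟩
      intro p hp hcond
      rcases hcond with (h | h | h | h) | (h | h)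
      · exact absurd ⟨p, hp, Or.inl h⟩ ht₁
      · exact absurd ⟨p, hp, Or.inr h⟩ ht₁
      · exact absurd ⟨p, hp, Or.inl h⟩ ht₂
      · exact absurd ⟨p, hp, Or.inr h⟩ ht₂
      · refine ⟨p.1, ?_, Or.inl rfl⟩
        rcases h with h | h
        · exact Finset.mem_union_left _ (by exact_mod_cast h)
        · exact Finset.mem_union_right _ (by exact_mod_cast h)
      · refine ⟨p.2, ?_, Or.inr rfl⟩
        rcases h with h | h
        · exact Finset.mem_union_left _ (by exact_mod_cast h)
        · exact Finset.mem_union_right _ (by exact_mod_cast h)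
  obtain ⟨F1, F2, hF1sub, hF2sub, hCfin, T, hTcard, hTcover⟩ := main
  set D : Finset (E × E) := P.filter (fun p => (e₁ = p.1 ∨ e₁ = p.2 ∨ e₂ = p.1 ∨ e₂ = p.2) ∨
      (p.1 ∈ (↑F1 ∪ ↑F2 : Set E) ∨ p.2 ∈ (↑F1 ∪ ↑F2 : Set E))) with hD
  have hDsub : D ⊆ P := Finset.filter_subset _ _
  set P' : Finset (E × E) := P \ D with hP'
  have hP'sub : P' ⊆ P := Finset.sdiff_subset
  -- card of D is at most 2 via injection into T
  have hDcard : D.card ≤ T.card := by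
    have hw : ∀ p ∈ D, ∃ t ∈ T, t = p.1 ∨ t = p.2 := by
      intro p hp
      obtain ⟨hpP, hpc⟩ := Finset.mem_filter.mp hp
      exact hTcover p hpP hpc
    choose φ hφT hφeq using hw
    have : Set.InjOn (fun p => if h : p ∈ D then φ p h else p.1) ↑D := by
      intro p hp q hq hpq
      simp only [Finset.mem_coe] at hp hq
      simp only [dif_pos hp, dif_pos hq] at hpq
      by_contra hne
      have h4 := hdisj p (hDsub hp) q (hDsub hq) hne
      rcases hφeq p hp with h1 | h1 <;> rcases hφeq q hq with h2 | h2 <;>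
        [skip; skip; skip; skip] <;>
        · have heq := h1.symm.trans (hpq.trans h2)
          tauto
    exact Finset.card_le_card_of_injOn _ (fun p hp => by
      simp only [Finset.mem_coe] at hp ⊢; simp only [dif_pos hp]; exact hφT p hp) this
  have hDcard2 : D.card ≤ 2 := hDcard.trans hTcard
  refine ⟨P', hP'sub, ⟨?_, ?_, ?_⟩, ?_⟩
  · -- membership
    intro p hp
    have hpP := hP'sub hp
    have hpD : p ∉ D := (Finset.mem_sdiff.mp hp).2
    have hnc : ¬((e₁ = p.1 ∨ e₁ = p.2 ∨ e₂ = p.1 ∨ e₂ = p.2) ∨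
        (p.1 ∈ (↑F1 ∪ ↑F2 : Set E) ∨ p.2 ∈ (↑F1 ∪ ↑F2 : Set E))) := by
      intro h; exact hpD (Finset.mem_filter.mpr ⟨hpP, h⟩)
    push_neg at hnc
    obtain ⟨⟨h1, h2, h3, h4⟩, _, _⟩ := hnc
    obtain ⟨hm1, hm2, hm3⟩ := hmem p hpP
    refine ⟨⟨hm1, ?_⟩, ⟨hm2, ?_⟩, hm3⟩
    · simp only [Set.mem_insert_iff, Set.mem_singleton_iff]
      push_neg
      exact ⟨fun h => h1 h.symm, fun h => h3 h.symm⟩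
    · simp only [Set.mem_insert_iff, Set.mem_singleton_iff]
      push_neg
      exact ⟨fun h => h2 h.symm, fun h => h4 h.symm⟩
  · -- disjointness
    intro p hp q hq hne
    exact hdisj p (hP'sub hp) q (hP'sub hq) hne
  · -- connectivity
    refine conn_mono ends ?_ hCfin
    intro y hy
    have hyP' : (y ∈ S \ {e₁, e₂}) → (∀ p ∈ P', y ≠ p.1 ∧ y ≠ p.2) →
        y ∈ PairsRemoved (S \ {e₁, e₂}) P' := fun h1 h2 => ⟨h1, h2⟩
    have hFnotP' : ∀ z ∈ (↑F1 ∪ ↑F2 : Set E), ∀ p ∈ P', z ≠ p.1 ∧ z ≠ p.2 := by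
      intro z hz p hp
      have hpD : p ∉ D := (Finset.mem_sdiff.mp hp).2
      constructor
      · intro h; subst h
        exact hpD (Finset.mem_filter.mpr ⟨hP'sub hp, Or.inr (Or.inl hz)⟩)
      · intro h; subst h
        exact hpD (Finset.mem_filter.mpr ⟨hP'sub hp, Or.inr (Or.inr hz)⟩)
    rcases hy with hy | hy
    · obtain ⟨hy, hy2⟩ := hy
      simp only [Set.mem_singleton_iff] at hy2
      rcases hy with hy | hy
      · -- y ∈ C0 \ {e₁}
        obtain ⟨⟨hyS, hyP₀⟩, hy1⟩ := hy
        simp only [Set.mem_singleton_iff] at hy1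
        refine ⟨⟨hyS, ?_⟩, ?_⟩
        · simp only [Set.mem_insert_iff, Set.mem_singleton_iff]; tauto
        · intro p hp
          have hpP := hP'sub hp
          have hpD : p ∉ D := (Finset.mem_sdiff.mp hp).2
          by_cases hpe : e₁ = p.1 ∨ e₁ = p.2 ∨ e₂ = p.1 ∨ e₂ = p.2
          · exact absurd (Finset.mem_filter.mpr ⟨hpP, Or.inl hpe⟩) hpD
          · exact hyP₀ p (Finset.mem_filter.mpr ⟨hpP, hpe⟩)
      · -- y ∈ F1
        refine ⟨hF1sub hy, hFnotP' y (Or.inl hy)⟩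
    · -- y ∈ F2
      refine ⟨hF2sub hy, hFnotP' y (Or.inr hy)⟩
  · -- cardinality
    have h1 : P'.card = P.card - D.card := Finset.card_sdiff_of_subset hDsub
    have h2 : D.card ≤ P.card := Finset.card_le_card hDsub
    omega

end Step

section Final
variable {V E : Type} (ends : E → Sym2 V)

lemma step_main {S : Set E} {e f : E} {P : Finset (E × E)}
    (hconn2 : ConnOn ends (S \ {e, f})) (hV : ValidOn ends S P) :
    ∃ P' : Finset (E × E), ValidOn ends (S \ {e, f}) P' ∧ P.card ≤ P'.card + 2 := by
  classical
  by_cases h : (∃ p ∈ P, f = p.1 ∨ f = p.2) → (∃ p ∈ P, e = p.1 ∨ e = p.2)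
  · obtain ⟨P', _, hv, hcard⟩ := step_aux ends hconn2 hV h
    exact ⟨P', hv, hcard⟩
  · push_neg at h
    have hsw : S \ {f, e} = S \ {e, f} := by rw [Set.pair_comm]
    obtain ⟨P', _, hv, hcard⟩ := step_aux ends (hsw ▸ hconn2 : ConnOn ends (S \ {f, e}))
      hV (fun _ => h.1)
    exact ⟨P', hsw ▸ hv, hcard⟩

lemma maxPairsOn_le [Fintype E] {S : Set E} {n : ℕ}
    (h : ∀ P : Finset (E × E), ValidOn ends S P → P.card ≤ n) :
    maxPairsOn ends S ≤ n := by
  refine csSup_le' ?_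
  rintro m ⟨P, hP, rfl⟩
  exact h P hP

lemma le_maxPairsOn [Fintype E] {S : Set E} {P : Finset (E × E)}
    (h : ValidOn ends S P) : P.card ≤ maxPairsOn ends S := by
  classical
  refine le_csSup ⟨Fintype.card (E × E), ?_⟩ ⟨P, h, rfl⟩
  rintro m ⟨Q, _, rfl⟩
  exact Finset.card_le_univ Q

end Final


/-- a greedy removal sequence of `k` disjoint pairs of adjacent edges,
ending when no further pair can be removed, satisfies `m(G) ≤ 2k`. -/
theorem greedy_sequence_bound {V E : Type} [Fintype V] [Fintype E]
    (ends : E → Sym2 V) (k : ℕ) (H : Fin (k + 1) → Set E)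
    (h0 : H 0 = Set.univ)
    (hconn : ∀ i, ConnOn ends (H i))
    (hstep : ∀ i : Fin k, ∃ e f : E, AdjPair ends e f ∧
      e ∈ H i.castSucc ∧ f ∈ H i.castSucc ∧ H i.succ = H i.castSucc \ {e, f})
    (hterm : ∀ e f : E, e ∈ H (Fin.last k) → f ∈ H (Fin.last k) →
      AdjPair ends e f → ¬ ConnOn ends (H (Fin.last k) \ {e, f})) :
    maxPairsOn ends Set.univ ≤ 2 * k := by
  classical
  have key : ∀ d : ℕ, (hd : d ≤ k) →
      maxPairsOn ends (H ⟨k - d, by omega⟩) ≤ 2 * d := by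
    intro d
    induction d with
    | zero =>
      intro _
      have hlast : (⟨k - 0, by omega⟩ : Fin (k + 1)) = Fin.last k := by
        apply Fin.ext; simp [Fin.last]
      rw [hlast]
      refine maxPairsOn_le ends ?_
      intro P hP
      by_contra hne
      obtain ⟨p, hp⟩ := Finset.card_pos.mp (by omega : 0 < P.card)
      obtain ⟨hmem, _, hconnP⟩ := hP
      obtain ⟨h1, h2, hadj⟩ := hmem p hp
      refine hterm p.1 p.2 h1 h2 hadj (conn_mono ends ?_ hconnP)
      rintro y ⟨hyS, hy⟩
      refine ⟨hyS, ?_⟩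
      simp only [Set.mem_insert_iff, Set.mem_singleton_iff]
      push_neg
      exact hy p hp
    | succ d ih =>
      intro hd
      set i : Fin k := ⟨k - (d + 1), by omega⟩ with hi
      obtain ⟨e, f, hadj, he, hf, hHsucc⟩ := hstep i
      have hcs : i.castSucc = (⟨k - (d + 1), by omega⟩ : Fin (k + 1)) := by
        apply Fin.ext; simp [hi, Fin.castSucc]
      have hsc : i.succ = (⟨k - d, by omega⟩ : Fin (k + 1)) := by
        apply Fin.ext; simp [hi, Fin.succ]; omega
      have hconnsucc : ConnOn ends (H i.castSucc \ {e, f}) := by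
        rw [← hHsucc]; exact hconn i.succ
      rw [← hcs]
      refine maxPairsOn_le ends ?_
      intro P hP
      obtain ⟨P', hP'valid, hcard⟩ := step_main ends hconnsucc hP
      have h1 : P'.card ≤ maxPairsOn ends (H i.succ) := by
        rw [hHsucc]; exact le_maxPairsOn ends hP'valid
      have h2 : maxPairsOn ends (H i.succ) ≤ 2 * d := by
        rw [hsc]; exact ih (by omega)
      omega
  have hk := key k le_rfl
  have h00 : (⟨k - k, by omega⟩ : Fin (k + 1)) = 0 := by
    apply Fin.ext; simp
  rw [h00, h0] at hk
  exact hk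
end

section
/- Let H be a connected spanning subgraph of a connected multigraph G, and let {e,f} be a pair of adjacent edges of G not contained in H. Then m(H ∪ {e,f}) ≥ m(H) + 1, where m denotes the maximum number of pairwise disjoint pairs of adjacent edges whose removal leaves the graph connected. -/
/-- adding a pair of adjacent edges to a connected spanning subgraph
increases `m` by at least one. -/
theorem maxPairs_add_pair {V E : Type} [Fintype V] [Fintype E]
    (ends : E → Sym2 V) (S : Set E) (hS : ConnOn ends S) (e f : E)
    (he : e ∉ S) (hf : f ∉ S) (hadj : AdjPair ends e f) :
    maxPairsOn ends S + 1 ≤ maxPairsOn ends (S ∪ {e, f}) := by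
  classical
  set T : Set ℕ := {k | ∃ P : Finset (E × E), ValidOn ends S P ∧ P.card = k} with hT
  have hbdd : ∀ k ∈ T, k ≤ Fintype.card (E × E) := by
    rintro k ⟨P, _, rfl⟩
    exact P.card_le_univ.trans_eq (Finset.card_univ)
  have hne : (0 : ℕ) ∈ T := by
    refine ⟨∅, ⟨?_, ?_, ?_⟩, by simp⟩
    · simp
    · simp
    · have : PairsRemoved S (∅ : Finset (E × E)) = S := by
        ext x; simp [PairsRemoved]
      rw [this]; exact hS
  have hmem : maxPairsOn ends S ∈ T := by
    have : T.Nonempty := ⟨0, hne⟩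
    exact Nat.sSup_mem this ⟨_, hbdd⟩
  obtain ⟨P, hP, hcard⟩ := hmem
  obtain ⟨hP1, hP2, hP3⟩ := hP
  have hef : (e, f) ∉ P := fun h => he (hP1 _ h).1
  set Q : Finset (E × E) := insert (e, f) P with hQ
  have hQcard : Q.card = maxPairsOn ends S + 1 := by
    rw [hQ, Finset.card_insert_of_notMem hef, hcard]
  have hQvalid : ValidOn ends (S ∪ {e, f}) Q := by
    refine ⟨?_, ?_, ?_⟩
    · rintro p hp
      rcases Finset.mem_insert.mp hp with rfl | hp
      · exact ⟨Or.inr (Or.inl rfl), Or.inr (Or.inr rfl), hadj⟩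
      · exact ⟨Or.inl (hP1 p hp).1, Or.inl (hP1 p hp).2.1, (hP1 p hp).2.2⟩
    · rintro p hp q hq hne'
      rcases Finset.mem_insert.mp hp with rfl | hp <;>
        rcases Finset.mem_insert.mp hq with rfl | hq
      · exact absurd rfl hne'
      · exact ⟨fun h => he (show e ∈ S by rw [show e = q.1 from h]; exact (hP1 q hq).1),
          fun h => he (show e ∈ S by rw [show e = q.2 from h]; exact (hP1 q hq).2.1),
          fun h => hf (show f ∈ S by rw [show f = q.1 from h]; exact (hP1 q hq).1),
          fun h => hf (show f ∈ S by rw [show f = q.2 from h]; exact (hP1 q hq).2.1)⟩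
      · exact ⟨fun h => he (show e ∈ S by rw [show e = p.1 from h.symm]; exact (hP1 p hp).1),
          fun h => hf (show f ∈ S by rw [show f = p.1 from h.symm]; exact (hP1 p hp).1),
          fun h => he (show e ∈ S by rw [show e = p.2 from h.symm]; exact (hP1 p hp).2.1),
          fun h => hf (show f ∈ S by rw [show f = p.2 from h.symm]; exact (hP1 p hp).2.1)⟩
      · exact hP2 p hp q hq hne'
    · intro a b
      refine Relation.ReflTransGen.mono ?_ a b (hP3 a b)
      rintro x y ⟨g, hg, hgy⟩
      refine ⟨g, ?_, hgy⟩
      obtain ⟨hgS, hgP⟩ := hg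
      refine ⟨Or.inl hgS, ?_⟩
      rintro p hp
      rcases Finset.mem_insert.mp hp with rfl | hp
      · exact ⟨fun h => he (show e ∈ S by rw [← show g = e from h]; exact hgS),
          fun h => hf (show f ∈ S by rw [← show g = f from h]; exact hgS)⟩
      · exact hgP p hp
  have hmem' : maxPairsOn ends S + 1 ∈
      {k | ∃ P : Finset (E × E), ValidOn ends (S ∪ {e, f}) P ∧ P.card = k} :=
    ⟨Q, hQvalid, hQcard⟩
  refine le_csSup ⟨Fintype.card (E × E), ?_⟩ hmem'
  rintro k ⟨P', _, rfl⟩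
  exact P'.card_le_univ.trans_eq (Finset.card_univ)
end

section
/- Every finite connected multigraph with an odd number of edges admits a partition of its edge set into pairs of adjacent edges together with exactly one unpaired edge. -/
namespace OddEdgeAux

open SimpleGraph

variable {V E : Type} [Fintype V] [Fintype E] [DecidableEq E] [DecidableEq V]
set_option linter.unusedSectionVars false

def graphOf (ends : E → Sym2 V) (S : Finset E) : SimpleGraph V where
  Adj x y := x ≠ y ∧ ∃ e ∈ S, ends e = s(x, y)
  symm := by
    constructor
    rintro x y ⟨hxy, e, he, hee⟩
    exact ⟨hxy.symm, e, he, by rw [hee]; exact Sym2.eq_swap⟩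
  loopless := by constructor; rintro x ⟨h, -⟩; exact h rfl

lemma graphOf_adj {ends : E → Sym2 V} {S : Finset E} {x y : V} :
    (graphOf ends S).Adj x y ↔ x ≠ y ∧ ∃ e ∈ S, ends e = s(x, y) := Iff.rfl

def SuppV (ends : E → Sym2 V) (S : Finset E) : Set V := {x | ∃ e ∈ S, x ∈ ends e}

def Conn2 (ends : E → Sym2 V) (S : Finset E) : Prop :=
  ∀ a ∈ SuppV ends S, ∀ b ∈ SuppV ends S, (graphOf ends S).Reachable a b

def IsPairing (ends : E → Sym2 V) (P : Finset (E × E)) (T : Finset E) : Prop :=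
  (∀ p ∈ P, AdjPair ends p.1 p.2) ∧
  (∀ p ∈ P, ∀ q ∈ P, p ≠ q → p.1 ≠ q.1 ∧ p.1 ≠ q.2 ∧ p.2 ≠ q.1 ∧ p.2 ≠ q.2) ∧
  (∀ p ∈ P, p.1 ∈ T ∧ p.2 ∈ T) ∧
  (∀ x ∈ T, ∃ p ∈ P, x = p.1 ∨ x = p.2)

lemma IsPairing.union {ends : E → Sym2 V} {P₁ P₂ : Finset (E × E)} {T₁ T₂ : Finset E}
    (h₁ : IsPairing ends P₁ T₁) (h₂ : IsPairing ends P₂ T₂)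
    (hdisj : ∀ x, x ∈ T₁ → x ∉ T₂) : IsPairing ends (P₁ ∪ P₂) (T₁ ∪ T₂) := by
  obtain ⟨a₁, d₁, m₁, c₁⟩ := h₁
  obtain ⟨a₂, d₂, m₂, c₂⟩ := h₂
  refine ⟨?_, ?_, ?_, ?_⟩
  · intro p hp
    rcases Finset.mem_union.mp hp with h | h
    · exact a₁ p h
    · exact a₂ p h
  · intro p hp q hq hpq
    rcases Finset.mem_union.mp hp with h | h <;> rcases Finset.mem_union.mp hq with h' | h'
    · exact d₁ p h q h' hpq
    · obtain ⟨hp1, hp2⟩ := m₁ p h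
      obtain ⟨hq1, hq2⟩ := m₂ q h'
      exact ⟨fun he => hdisj _ hp1 (he ▸ hq1), fun he => hdisj _ hp1 (he ▸ hq2),
        fun he => hdisj _ hp2 (he ▸ hq1), fun he => hdisj _ hp2 (he ▸ hq2)⟩
    · obtain ⟨hp1, hp2⟩ := m₂ p h
      obtain ⟨hq1, hq2⟩ := m₁ q h'
      exact ⟨fun he => hdisj _ hq1 (he ▸ hp1),
        fun he => hdisj _ hq2 (he ▸ hp1), fun he => hdisj _ hq1 (he ▸ hp2),
        fun he => hdisj _ hq2 (he ▸ hp2)⟩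
    · exact d₂ p h q h' hpq
  · intro p hp
    rcases Finset.mem_union.mp hp with h | h
    · exact ⟨Finset.mem_union_left _ (m₁ p h).1, Finset.mem_union_left _ (m₁ p h).2⟩
    · exact ⟨Finset.mem_union_right _ (m₂ p h).1, Finset.mem_union_right _ (m₂ p h).2⟩
  · intro x hx
    rcases Finset.mem_union.mp hx with h | h
    · obtain ⟨p, hp, hx'⟩ := c₁ x h
      exact ⟨p, Finset.mem_union_left _ hp, hx'⟩
    · obtain ⟨p, hp, hx'⟩ := c₂ x h
      exact ⟨p, Finset.mem_union_right _ hp, hx'⟩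


lemma pair_up (ends : E → Sym2 V) (v : V) :
    ∀ (T : Finset E), (∀ e ∈ T, v ∈ ends e) → Even T.card →
      ∃ P : Finset (E × E), IsPairing ends P T := by
  intro T
  induction T using Finset.strongInductionOn with
  | _ T ih =>
    intro hv heven
    rcases T.eq_empty_or_nonempty with rfl | ⟨e, he⟩
    · exact ⟨∅, by simp, by simp, by simp, by simp⟩
    · have h2 : 1 < T.card := by
        rcases heven with ⟨k, hk⟩
        have h0 : T.card ≠ 0 := Finset.card_ne_zero_of_mem he
        omega
      obtain ⟨f, hf, hfe⟩ := Finset.exists_mem_ne h2 e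
      have hfT' : f ∈ T.erase e := Finset.mem_erase.mpr ⟨hfe, hf⟩
      set T' := (T.erase e).erase f with hT'def
      have hT'sub : T' ⊆ T := (Finset.erase_subset _ _).trans (Finset.erase_subset _ _)
      have hT'ssub : T' ⊂ T := by
        refine Finset.ssubset_iff_of_subset hT'sub |>.mpr ⟨e, he, ?_⟩
        simp [hT'def]
      have hcard : T'.card + 2 = T.card := by
        rw [hT'def, Finset.card_erase_of_mem hfT', Finset.card_erase_of_mem he]
        omega
      have heven' : Even T'.card := by
        rcases heven with ⟨k, hk⟩
        exact ⟨k - 1, by omega⟩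
      obtain ⟨P, hadj, hdisj, hmem, hcov⟩ := ih T' hT'ssub (fun x hx => hv x (hT'sub hx)) heven'
      have hnotin : ∀ x ∈ T', x ≠ e ∧ x ≠ f := by
        intro x hx
        rw [hT'def] at hx
        exact ⟨Finset.ne_of_mem_erase (Finset.mem_of_mem_erase hx), Finset.ne_of_mem_erase hx⟩
      refine ⟨insert (e, f) P, ?_, ?_, ?_, ?_⟩
      · intro p hp
        rcases Finset.mem_insert.mp hp with rfl | hp'
        · exact ⟨Ne.symm hfe, v, hv e he, hv f hf⟩
        · exact hadj p hp'
      · intro p hp q hq hpq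
        rcases Finset.mem_insert.mp hp with rfl | hp' <;>
          rcases Finset.mem_insert.mp hq with h' | hq'
        · exact absurd h'.symm hpq
        · obtain ⟨h1, h2⟩ := hmem q hq'
          obtain ⟨hq1e, hq1f⟩ := hnotin q.1 h1
          obtain ⟨hq2e, hq2f⟩ := hnotin q.2 h2
          exact ⟨Ne.symm hq1e, Ne.symm hq2e, Ne.symm hq1f, Ne.symm hq2f⟩
        · subst h'
          obtain ⟨h1, h2⟩ := hmem p hp'
          obtain ⟨hq1e, hq1f⟩ := hnotin p.1 h1
          obtain ⟨hq2e, hq2f⟩ := hnotin p.2 h2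
          exact ⟨hq1e, hq1f, hq2e, hq2f⟩
        · exact hdisj p hp' q hq' hpq
      · intro p hp
        rcases Finset.mem_insert.mp hp with rfl | hp'
        · exact ⟨he, hf⟩
        · exact ⟨hT'sub (hmem p hp').1, hT'sub (hmem p hp').2⟩
      · intro x hx
        by_cases hxe : x = e
        · exact ⟨(e, f), Finset.mem_insert_self _ _, Or.inl hxe⟩
        by_cases hxf : x = f
        · exact ⟨(e, f), Finset.mem_insert_self _ _, Or.inr hxf⟩
        · have hxT' : x ∈ T' := by
            rw [hT'def]
            exact Finset.mem_erase.mpr ⟨hxf, Finset.mem_erase.mpr ⟨hxe, hx⟩⟩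
          obtain ⟨p, hp, h⟩ := hcov x hxT'
          exact ⟨p, Finset.mem_insert_of_mem hp, h⟩

lemma dist_lt_of_mem_support {G : SimpleGraph V} {r w y : V}
    (p : G.Walk r w) (hp : p.length = G.dist r w) (hy : y ∈ p.support) :
    G.dist r y ≤ G.dist r w ∧ (y ≠ w → G.dist r y < G.dist r w) := by
  have h1 : G.dist r y ≤ (p.takeUntil y hy).length := SimpleGraph.dist_le _
  have h2 : (p.takeUntil y hy).length + (p.dropUntil y hy).length = p.length := by
    rw [← SimpleGraph.Walk.length_append, SimpleGraph.Walk.take_spec]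
  constructor
  · omega
  · intro hyw
    have h3 : (p.dropUntil y hy).length ≠ 0 := fun h =>
      hyw (SimpleGraph.Walk.eq_of_length_eq_zero h)
    omega

lemma reach_of_edges {G G' : SimpleGraph V} {a b : V} (p : G.Walk a b)
    (h : ∀ x y, s(x, y) ∈ p.edges → G'.Adj x y) : G'.Reachable a b := by
  induction p with
  | nil => exact Reachable.refl _
  | @cons u v w ha q ih =>
    have h1 : G'.Adj u v := h u v (by simp)
    exact h1.reachable.trans (ih fun x y hxy => h x y (by simp [hxy]))

lemma reach_avoid (ends : E → Sym2 V) {S S' : Finset E} {r w : V}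
    (hsub : S' ⊆ S) (hr : (graphOf ends S).Reachable r w)
    (hrem : ∀ e ∈ S, e ∉ S' →
      (∃ z, ends e = s(z, z)) ∨
      ∃ y, y ∈ ends e ∧ y ≠ w ∧
        (graphOf ends S).dist r w ≤ (graphOf ends S).dist r y) :
    (graphOf ends S').Reachable r w := by
  obtain ⟨p, hp⟩ := hr.exists_walk_length_eq_dist
  apply reach_of_edges p
  intro a b hab
  obtain ⟨hne, e, heS, hee⟩ := p.adj_of_mem_edges hab
  by_cases heS' : e ∈ S'
  · exact ⟨hne, e, heS', hee⟩
  · exfalso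
    rcases hrem e heS heS' with ⟨z, hz⟩ | ⟨y, hy, hyw, hyd⟩
    · rw [hz] at hee
      rcases Sym2.eq_iff.mp hee with ⟨h1, h2⟩ | ⟨h1, h2⟩
      · exact hne (h1.symm.trans h2)
      · exact hne (h2.symm.trans h1)
    · rw [hee] at hy
      have hysupp : y ∈ p.support := by
        rcases Sym2.mem_iff.mp hy with rfl | rfl
        · exact p.fst_mem_support_of_mem_edges hab
        · exact p.snd_mem_support_of_mem_edges hab
      have hlt := (dist_lt_of_mem_support p hp hysupp).2 hyw
      omega



lemma main_aux (ends : E → Sym2 V) :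
    ∀ (n : ℕ) (S : Finset E), S.card ≤ n → S.Nonempty → Conn2 ends S →
      ∃ (P : Finset (E × E)) (R : Finset E), R ⊆ S ∧ R.card = S.card % 2 ∧
        IsPairing ends P (S \ R) := by
  intro n
  induction n with
  | zero =>
    intro S hc hne _
    exact absurd (Finset.card_eq_zero.mp (Nat.le_zero.mp hc))
      (Finset.nonempty_iff_ne_empty.mp hne)
  | succ n ih =>
    intro S hcard hne hconn
    classical
    by_cases hstar : ∃ v : V, ∀ e ∈ S, v ∈ ends e
    · obtain ⟨v, hv⟩ := hstar
      by_cases hev : Even S.card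
      · obtain ⟨P, hP⟩ := pair_up ends v S hv hev
        refine ⟨P, ∅, Finset.empty_subset _, ?_, by simpa using hP⟩
        have h0 := Nat.even_iff.mp hev
        simp [h0]
      · obtain ⟨e₀, he₀⟩ := hne
        have hcard' : Even (S.erase e₀).card := by
          rw [Finset.card_erase_of_mem he₀]
          rw [Nat.even_iff] at hev ⊢
          have : S.card ≠ 0 := Finset.card_ne_zero_of_mem he₀
          omega
        obtain ⟨P, hP⟩ := pair_up ends v (S.erase e₀)
          (fun e he => hv e (Finset.mem_of_mem_erase he)) hcard'
        refine ⟨P, {e₀}, Finset.singleton_subset_iff.mpr he₀, ?_, ?_⟩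
        · rw [Nat.even_iff] at hev
          simp only [Finset.card_singleton]
          omega
        · rwa [Finset.sdiff_singleton_eq_erase]
    · -- non-star case
      obtain ⟨e₁, he₁⟩ := hne
      set G := graphOf ends S with hGdef
      set r := (ends e₁).out.1 with hrdef
      have hr : r ∈ ends e₁ := Sym2.out_fst_mem _
      have hrS : r ∈ SuppV ends S := ⟨e₁, he₁, hr⟩
      have hreach : ∀ w ∈ SuppV ends S, G.Reachable r w := fun w hw => hconn r hrS w hw
      set F : Finset V := Finset.univ.filter (fun y => y ∈ SuppV ends S) with hFdef
      have hFne : F.Nonempty := ⟨r, by simp [hFdef, hrS]⟩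
      obtain ⟨u₀, hu₀F, hu₀max⟩ := F.exists_max_image (fun y => G.dist r y) hFne
      have hu₀S : u₀ ∈ SuppV ends S := (Finset.mem_filter.mp hu₀F).2
      set d := G.dist r u₀ with hd
      have hdle : ∀ w ∈ SuppV ends S, G.dist r w ≤ d :=
        fun w hw => hu₀max w (by simp [hFdef, hw])
      have hd1 : 1 ≤ d := by
        by_contra hd0
        push_neg at hd0
        apply hstar
        refine ⟨r, fun e he => ?_⟩
        have hx : ∀ y ∈ ends e, y = r := by
          intro y hy
          have hyS : y ∈ SuppV ends S := ⟨e, he, hy⟩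
          by_contra hyr
          have h1 := (hreach y hyS).pos_dist_of_ne (Ne.symm hyr)
          have h2 := hdle y hyS
          omega
        have hmem := Sym2.out_fst_mem (ends e)
        exact hx _ hmem ▸ hmem
      set I : V → Finset E := fun y => S.filter (fun e => y ∈ ends e) with hIdef
      have hImem : ∀ y e, e ∈ I y ↔ e ∈ S ∧ y ∈ ends e := by
        intro y e; simp [hIdef]
      have hedge : ∀ u', u' ∈ SuppV ends S → G.dist r u' = d →
          ∃ g x, g ∈ I u' ∧ x ≠ u' ∧ ends g = s(u', x) ∧ G.dist r x + 1 ≤ d := by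
        intro u' hu'S hu'd
        have hu'r : u' ≠ r := by
          rintro rfl
          rw [SimpleGraph.dist_self] at hu'd
          omega
        obtain ⟨p, hp⟩ := (hreach u' hu'S).symm.exists_walk_length_eq_dist
        cases p with
        | nil => exact absurd rfl hu'r
        | @cons _ x _ hadj q =>
          obtain ⟨hne', g, hgS, hg⟩ := hadj
          refine ⟨g, x, (hImem u' g).mpr ⟨hgS, by rw [hg]; exact Sym2.mem_mk_left _ _⟩,
            Ne.symm hne', hg, ?_⟩
          change q.length + 1 = _ at hp
          have h1 : G.dist x r ≤ q.length := SimpleGraph.dist_le q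
          have h2 := SimpleGraph.dist_comm (G := G) (u := r) (v := x)
          have h3 := SimpleGraph.dist_comm (G := G) (u := r) (v := u')
          omega
      have hstep : ∀ g h x, g ∈ S → h ∈ S → g ≠ h → x ∈ ends g → x ∈ ends h →
          Conn2 ends (S \ {g, h}) →
          ∃ P R, R ⊆ S ∧ R.card = S.card % 2 ∧ IsPairing ends P (S \ R) := by
        intro g h x hgS hhS hgh hxg hxh hconn₂
        have hghS : ({g, h} : Finset E) ⊆ S := by
          intro t ht
          rcases Finset.mem_insert.mp ht with rfl | ht
          · exact hgS
          · rw [Finset.mem_singleton] at ht; subst ht; exact hhS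
        have hP₀ : IsPairing ends {(g, h)} {g, h} := by
          refine ⟨?_, ?_, ?_, ?_⟩
          · intro p hp
            rw [Finset.mem_singleton] at hp; subst hp
            exact ⟨hgh, x, hxg, hxh⟩
          · intro p hp q hq hpq
            rw [Finset.mem_singleton] at hp hq
            exact absurd (hp.trans hq.symm) hpq
          · intro p hp
            rw [Finset.mem_singleton] at hp; subst hp
            exact ⟨Finset.mem_insert_self _ _, by simp⟩
          · intro y hy
            rcases Finset.mem_insert.mp hy with hy | hy
            · exact ⟨(g, h), Finset.mem_singleton_self _, Or.inl hy⟩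
            · rw [Finset.mem_singleton] at hy
              exact ⟨(g, h), Finset.mem_singleton_self _, Or.inr hy⟩
        have hcard2 : ({g, h} : Finset E).card = 2 := by
          rw [Finset.card_insert_of_notMem (by simpa using hgh), Finset.card_singleton]
        have hcards : (S \ {g, h}).card + 2 = S.card := by
          rw [← hcard2]
          exact Finset.card_sdiff_add_card_eq_card hghS
        rcases (S \ {g, h}).eq_empty_or_nonempty with hemp | hne₂
        · have hSeq : S = {g, h} := by
            apply Finset.Subset.antisymm _ hghS
            intro t ht
            by_contra hcon
            exact (Finset.eq_empty_iff_forall_notMem.mp hemp t)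
              (Finset.mem_sdiff.mpr ⟨ht, hcon⟩)
          refine ⟨{(g, h)}, ∅, Finset.empty_subset _, ?_, ?_⟩
          · rw [hSeq, hcard2]
            simp
          · rw [Finset.sdiff_empty, hSeq]
            exact hP₀
        · obtain ⟨P₁, R₁, hR₁sub, hR₁card, hP₁⟩ := ih (S \ {g, h}) (by omega) hne₂ hconn₂
          refine ⟨{(g, h)} ∪ P₁, R₁, hR₁sub.trans Finset.sdiff_subset, ?_, ?_⟩
          · rw [hR₁card]; omega
          · have hgR : g ∉ R₁ := fun hc => (Finset.mem_sdiff.mp (hR₁sub hc)).2 (by simp)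
            have hhR : h ∉ R₁ := fun hc => (Finset.mem_sdiff.mp (hR₁sub hc)).2 (by simp)
            have hset : S \ R₁ = {g, h} ∪ ((S \ {g, h}) \ R₁) := by
              ext t
              simp only [Finset.mem_sdiff, Finset.mem_union, Finset.mem_insert,
                Finset.mem_singleton]
              constructor
              · rintro ⟨htS, htR⟩
                by_cases h1 : t = g ∨ t = h
                · exact Or.inl h1
                · exact Or.inr ⟨⟨htS, h1⟩, htR⟩
              · rintro ((rfl | rfl) | ⟨⟨htS, -⟩, htR⟩)
                · exact ⟨hgS, hgR⟩
                · exact ⟨hhS, hhR⟩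
                · exact ⟨htS, htR⟩
            rw [hset]
            refine hP₀.union hP₁ ?_
            intro t ht htc
            rw [Finset.mem_sdiff] at htc
            exact (Finset.mem_sdiff.mp htc.1).2 ht
      by_cases hB : ∃ u, u ∈ SuppV ends S ∧ G.dist r u = d ∧ 2 ≤ (I u).card
      · obtain ⟨u, huS, hud, hu2⟩ := hB
        have havoid : ∀ w, w ∈ SuppV ends S → w ≠ u →
            (graphOf ends (S \ I u)).Reachable r w := by
          intro w hw hwu
          refine reach_avoid ends Finset.sdiff_subset (hreach w hw) ?_
          intro e heS heS'
          have hue : u ∈ ends e := by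
            by_contra hcon
            exact heS' (Finset.mem_sdiff.mpr ⟨heS, fun hc => hcon ((hImem u e).mp hc).2⟩)
          right
          refine ⟨u, hue, Ne.symm hwu, ?_⟩
          rw [hud]
          exact hdle w hw
        obtain ⟨g, x, hgI, hxu, hgends, hxd⟩ := hedge u huS hud
        have hgS : g ∈ S := ((hImem u g).mp hgI).1
        have hxS : x ∈ SuppV ends S := ⟨g, hgS, by rw [hgends]; exact Sym2.mem_mk_right _ _⟩
        by_cases hIev : Even (I u).card
        · -- case B, even degree at u
          obtain ⟨P₀, hP₀⟩ := pair_up ends u (I u) (fun e he => ((hImem u e).mp he).2) hIev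
          rcases (S \ I u).eq_empty_or_nonempty with hemp | hne₁
          · have hSI : S = I u := by
              apply Finset.Subset.antisymm _ (Finset.filter_subset _ _)
              intro t ht
              by_contra hcon
              exact (Finset.eq_empty_iff_forall_notMem.mp hemp t)
                (Finset.mem_sdiff.mpr ⟨ht, hcon⟩)
            refine ⟨P₀, ∅, Finset.empty_subset _, ?_, ?_⟩
            · rw [Finset.card_empty, hSI]
              have := Nat.even_iff.mp hIev
              omega
            · rw [Finset.sdiff_empty, hSI]
              exact hP₀
          · have hconn₁ : Conn2 ends (S \ I u) := by
              have key : ∀ c ∈ SuppV ends (S \ I u), (graphOf ends (S \ I u)).Reachable r c := by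
                intro c hc
                obtain ⟨e, heS₁, hce⟩ := hc
                have heS : e ∈ S := (Finset.mem_sdiff.mp heS₁).1
                have hcu : c ≠ u := by
                  rintro rfl
                  exact (Finset.mem_sdiff.mp heS₁).2 ((hImem c e).mpr ⟨heS, hce⟩)
                exact havoid c ⟨e, heS, hce⟩ hcu
              intro a ha b hb
              exact (key a ha).symm.trans (key b hb)
            have hglt : g ∉ S \ I u := fun hc => (Finset.mem_sdiff.mp hc).2 hgI
            have hlt : (S \ I u).card < S.card :=
              Finset.card_lt_card ((Finset.ssubset_iff_of_subset Finset.sdiff_subset).mpr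
                ⟨g, hgS, hglt⟩)
            have hcards : (S \ I u).card + (I u).card = S.card :=
              Finset.card_sdiff_add_card_eq_card (Finset.filter_subset _ _)
            obtain ⟨P₁, R₁, hR₁sub, hR₁card, hP₁⟩ := ih (S \ I u) (by omega) hne₁ hconn₁
            refine ⟨P₀ ∪ P₁, R₁, hR₁sub.trans Finset.sdiff_subset, ?_, ?_⟩
            · rw [hR₁card]
              have := Nat.even_iff.mp hIev
              omega
            · have hset : S \ R₁ = I u ∪ ((S \ I u) \ R₁) := by
                ext t
                simp only [Finset.mem_sdiff, Finset.mem_union]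
                constructor
                · rintro ⟨htS, htR⟩
                  by_cases h1 : t ∈ I u
                  · exact Or.inl h1
                  · exact Or.inr ⟨⟨htS, h1⟩, htR⟩
                · rintro (h1 | ⟨⟨htS, -⟩, htR⟩)
                  · refine ⟨Finset.filter_subset _ _ h1, fun hc => ?_⟩
                    exact (Finset.mem_sdiff.mp (hR₁sub hc)).2 h1
                  · exact ⟨htS, htR⟩
              rw [hset]
              exact hP₀.union hP₁
                (fun t ht htc => (Finset.mem_sdiff.mp (Finset.mem_sdiff.mp htc).1).2 ht)
        · -- case B, odd degree at u
          set T₀ := (I u).erase g with hT₀def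
          have hIu1 : 1 ≤ (I u).card := by omega
          have hT₀even : Even T₀.card := by
            rw [hT₀def, Finset.card_erase_of_mem hgI]
            rw [Nat.even_iff] at hIev ⊢
            omega
          obtain ⟨P₀, hP₀⟩ := pair_up ends u T₀
            (fun e he => ((hImem u e).mp (Finset.mem_of_mem_erase he)).2) hT₀even
          set S₁ := insert g (S \ I u) with hS₁def
          have hgnot : g ∉ S \ I u := fun hc => (Finset.mem_sdiff.mp hc).2 hgI
          have hS₁sub : S₁ ⊆ S := Finset.insert_subset hgS Finset.sdiff_subset
          have hS₁card : S₁.card = (S \ I u).card + 1 := Finset.card_insert_of_notMem hgnot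
          have hcards : (S \ I u).card + (I u).card = S.card :=
            Finset.card_sdiff_add_card_eq_card (Finset.filter_subset _ _)
          have hmono : graphOf ends (S \ I u) ≤ graphOf ends S₁ := by
            intro a b hab
            obtain ⟨h1, e, he, hee⟩ := hab
            exact ⟨h1, e, Finset.mem_insert_of_mem he, hee⟩
          have hconn₁ : Conn2 ends S₁ := by
            have hxreach : (graphOf ends S₁).Reachable r x := (havoid x hxS hxu).mono hmono
            have key : ∀ c ∈ SuppV ends S₁, (graphOf ends S₁).Reachable r c := by
              intro c hc
              obtain ⟨e, heS₁, hce⟩ := hc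
              rcases Finset.mem_insert.mp heS₁ with rfl | heS'
              · rw [hgends] at hce
                rcases Sym2.mem_iff.mp hce with rfl | rfl
                · refine hxreach.trans (SimpleGraph.Adj.reachable ?_)
                  refine ⟨hxu, e, Finset.mem_insert_self _ _, ?_⟩
                  rw [hgends]
                  exact Sym2.eq_swap
                · exact hxreach
              · have heS : e ∈ S := (Finset.mem_sdiff.mp heS').1
                have hcu : c ≠ u := by
                  rintro rfl
                  exact (Finset.mem_sdiff.mp heS').2 ((hImem c e).mpr ⟨heS, hce⟩)
                exact (havoid c ⟨e, heS, hce⟩ hcu).mono hmono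
            intro a ha b hb
            exact (key a ha).symm.trans (key b hb)
          have hS₁ne : S₁.Nonempty := ⟨g, Finset.mem_insert_self _ _⟩
          obtain ⟨P₁, R₁, hR₁sub, hR₁card, hP₁⟩ := ih S₁ (by omega) hS₁ne hconn₁
          refine ⟨P₀ ∪ P₁, R₁, hR₁sub.trans hS₁sub, ?_, ?_⟩
          · rw [hR₁card, hS₁card]
            rw [Nat.even_iff] at hIev
            omega
          · have hset : S \ R₁ = T₀ ∪ (S₁ \ R₁) := by
              ext t
              simp only [Finset.mem_sdiff, Finset.mem_union]
              constructor
              · rintro ⟨htS, htR⟩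
                by_cases h1 : t ∈ I u
                · by_cases h2 : t = g
                  · subst h2
                    exact Or.inr ⟨Finset.mem_insert_self _ _, htR⟩
                  · exact Or.inl (Finset.mem_erase.mpr ⟨h2, h1⟩)
                · exact Or.inr ⟨Finset.mem_insert_of_mem (Finset.mem_sdiff.mpr ⟨htS, h1⟩), htR⟩
              · rintro (h1 | ⟨h1, htR⟩)
                · have htI := Finset.mem_of_mem_erase h1
                  have htg := Finset.ne_of_mem_erase h1
                  refine ⟨Finset.filter_subset _ _ htI, fun hc => ?_⟩
                  rcases Finset.mem_insert.mp (hR₁sub hc) with h2 | h2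
                  · exact htg h2
                  · exact (Finset.mem_sdiff.mp h2).2 htI
                · exact ⟨hS₁sub h1, htR⟩
            rw [hset]
            refine hP₀.union hP₁ ?_
            intro t ht htc
            have h1 := (Finset.mem_sdiff.mp htc).1
            rcases Finset.mem_insert.mp h1 with h2 | h2
            · exact Finset.ne_of_mem_erase ht h2
            · exact (Finset.mem_sdiff.mp h2).2 (Finset.mem_of_mem_erase ht)
      · -- case C : all maximum-distance vertices have a single incident edge
        push_neg at hB
        have hM1 : ∀ w, w ∈ SuppV ends S → G.dist r w = d → ∀ e ∈ I w, ∀ e' ∈ I w, e = e' := by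
          intro w hw hwd
          refine Finset.card_le_one.mp ?_
          have := hB w hw hwd
          omega
        obtain ⟨g, x, hgI, hxu, hgends, hxd⟩ := hedge u₀ hu₀S hd.symm
        have huniq : ∀ e ∈ I u₀, e = g := fun e he => hM1 u₀ hu₀S hd.symm e he g hgI
        have hgS : g ∈ S := ((hImem u₀ g).mp hgI).1
        have hxS : x ∈ SuppV ends S := ⟨g, hgS, by rw [hgends]; exact Sym2.mem_mk_right _ _⟩
        have hxg : x ∈ ends g := by rw [hgends]; exact Sym2.mem_mk_right _ _
        have hcu_of : ∀ c e', e' ∈ S → e' ≠ g → c ∈ ends e' → c ≠ u₀ := by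
          intro c e' he'S he'g hce'
          rintro rfl
          exact he'g (huniq e' ((hImem c e').mpr ⟨he'S, hce'⟩))
        by_cases hi : ∃ h w, h ∈ I x ∧ h ≠ g ∧ w ≠ x ∧ ends h = s(x, w) ∧ G.dist r w = d
        · -- case C(i) : another pendant edge at x
          obtain ⟨h, w, hhIx, hhg, hwx, hhends, hwd⟩ := hi
          have hhS : h ∈ S := ((hImem x h).mp hhIx).1
          have hwh : w ∈ ends h := by rw [hhends]; exact Sym2.mem_mk_right _ _
          have hwS : w ∈ SuppV ends S := ⟨h, hhS, hwh⟩
          have huniqw : ∀ e ∈ I w, e = h :=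
            fun e he => hM1 w hwS hwd e he h ((hImem w h).mpr ⟨hhS, hwh⟩)
          refine hstep g h x hgS hhS (Ne.symm hhg) hxg
            (by rw [hhends]; exact Sym2.mem_mk_left _ _) ?_
          have key : ∀ c ∈ SuppV ends (S \ {g, h}),
              (graphOf ends (S \ {g, h})).Reachable r c := by
            intro c hc
            obtain ⟨e, heS₂, hce⟩ := hc
            obtain ⟨heS, hegh⟩ := Finset.mem_sdiff.mp heS₂
            have heg : e ≠ g := fun hc' => hegh (by simp [hc'])
            have heh : e ≠ h := fun hc' => hegh (by simp [hc'])
            have hcu : c ≠ u₀ := hcu_of c e heS heg hce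
            have hcw : c ≠ w := by
              rintro rfl
              exact heh (huniqw e ((hImem c e).mpr ⟨heS, hce⟩))
            have hcS : c ∈ SuppV ends S := ⟨e, heS, hce⟩
            refine reach_avoid ends Finset.sdiff_subset (hreach c hcS) ?_
            intro e' he'S he'S₂
            have he'gh : e' = g ∨ e' = h := by
              by_contra hcon
              push_neg at hcon
              exact he'S₂ (Finset.mem_sdiff.mpr ⟨he'S, by simp [hcon.1, hcon.2]⟩)
            right
            rcases he'gh with rfl | rfl
            · refine ⟨u₀, by rw [hgends]; exact Sym2.mem_mk_left _ _, Ne.symm hcu, ?_⟩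
              have h1 := hdle c hcS
              rw [← hGdef]
              omega
            · refine ⟨w, hwh, Ne.symm hcw, ?_⟩
              have h1 := hdle c hcS
              rw [← hGdef]
              omega
          intro a ha b hb
          exact (key a ha).symm.trans (key b hb)
        · by_cases hii : ∃ h, h ∈ I x ∧ h ≠ g ∧ ends h = s(x, x)
          · -- case C(ii) : a loop at x
            obtain ⟨h, hhIx, hhg, hhends⟩ := hii
            have hhS : h ∈ S := ((hImem x h).mp hhIx).1
            refine hstep g h x hgS hhS (Ne.symm hhg) hxg
              (by rw [hhends]; exact Sym2.mem_mk_left _ _) ?_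
            have key : ∀ c ∈ SuppV ends (S \ {g, h}),
                (graphOf ends (S \ {g, h})).Reachable r c := by
              intro c hc
              obtain ⟨e, heS₂, hce⟩ := hc
              obtain ⟨heS, hegh⟩ := Finset.mem_sdiff.mp heS₂
              have heg : e ≠ g := fun hc' => hegh (by simp [hc'])
              have hcu : c ≠ u₀ := hcu_of c e heS heg hce
              have hcS : c ∈ SuppV ends S := ⟨e, heS, hce⟩
              refine reach_avoid ends Finset.sdiff_subset (hreach c hcS) ?_
              intro e' he'S he'S₂
              have he'gh : e' = g ∨ e' = h := by
                by_contra hcon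
                push_neg at hcon
                exact he'S₂ (Finset.mem_sdiff.mpr ⟨he'S, by simp [hcon.1, hcon.2]⟩)
              rcases he'gh with rfl | rfl
              · right
                refine ⟨u₀, by rw [hgends]; exact Sym2.mem_mk_left _ _, Ne.symm hcu, ?_⟩
                have h1 := hdle c hcS
                rw [← hGdef]
                omega
              · exact Or.inl ⟨x, hhends⟩
            intro a ha b hb
            exact (key a ha).symm.trans (key b hb)
          · -- case C(iii)
            have hd2 : 2 ≤ d := by
              by_contra hcon
              push_neg at hcon
              have hd1' : d = 1 := by omega
              have hxr : x = r := by
                by_contra hxr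
                have h1 := (hreach x hxS).pos_dist_of_ne (Ne.symm hxr)
                omega
              obtain ⟨e, heS, heg⟩ : ∃ e ∈ S, e ≠ g := by
                by_contra hcon'
                push_neg at hcon'
                apply hstar
                refine ⟨u₀, fun e he => ?_⟩
                rw [hcon' e he, hgends]
                exact Sym2.mem_mk_left _ _
              set y := (ends e).out.1 with hydef
              have hy : y ∈ ends e := Sym2.out_fst_mem _
              have hyS : y ∈ SuppV ends S := ⟨e, heS, hy⟩
              by_cases hyr : y = r
              · obtain ⟨y₂, hy₂⟩ := Sym2.mem_iff_exists.mp hy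
                have heIx : e ∈ I x := (hImem x e).mpr ⟨heS, by rw [hxr, ← hyr]; exact hy⟩
                by_cases hy₂y : y₂ = y
                · refine hii ⟨e, heIx, heg, ?_⟩
                  rw [hy₂, hy₂y, hyr, ← hxr]
                · have hy₂S : y₂ ∈ SuppV ends S :=
                    ⟨e, heS, by rw [hy₂]; exact Sym2.mem_mk_right _ _⟩
                  have hy₂r : y₂ ≠ r := by rw [← hyr]; exact hy₂y
                  have hy₂d : G.dist r y₂ = d := by
                    have h1 := (hreach y₂ hy₂S).pos_dist_of_ne (Ne.symm hy₂r)
                    have h2 := hdle y₂ hy₂S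
                    omega
                  refine hi ⟨e, y₂, heIx, heg, ?_, ?_, hy₂d⟩
                  · rw [hxr, ← hyr]; exact hy₂y
                  · rw [hy₂, hxr, ← hyr]
              · have hyd : G.dist r y = d := by
                  have h1 := (hreach y hyS).pos_dist_of_ne (Ne.symm hyr)
                  have h2 := hdle y hyS
                  omega
                obtain ⟨g', x', hg'I, hx'y, hg'ends, hx'd⟩ := hedge y hyS hyd
                have hg'e : g' = e := hM1 y hyS hyd g' hg'I e ((hImem y e).mpr ⟨heS, hy⟩)
                have hx'S : x' ∈ SuppV ends S :=
                  ⟨g', ((hImem y g').mp hg'I).1, by rw [hg'ends]; exact Sym2.mem_mk_right _ _⟩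
                have hx'r : x' = r := by
                  by_contra hc
                  have h1 := (hreach x' hx'S).pos_dist_of_ne (Ne.symm hc)
                  omega
                have hends_e : ends e = s(y, x) := by
                  rw [← hg'e, hg'ends, hx'r, hxr]
                refine hi ⟨e, y, ?_, heg, ?_, ?_, hyd⟩
                · exact (hImem x e).mpr ⟨heS, by rw [hends_e]; exact Sym2.mem_mk_right _ _⟩
                · rw [hxr]; exact hyr
                · rw [hends_e]; exact Sym2.eq_swap
            have htri : d ≤ G.dist r x + 1 := by
              obtain ⟨p, hp⟩ := (hreach x hxS).exists_walk_length_eq_dist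
              have hadj : G.Adj x u₀ := ⟨hxu, g, hgS, by rw [hgends]; exact Sym2.eq_swap⟩
              have h1 := SimpleGraph.dist_le (p.concat hadj)
              rw [SimpleGraph.Walk.length_concat, hp] at h1
              omega
            have hxr : x ≠ r := by
              rintro rfl
              rw [SimpleGraph.dist_self] at htri
              omega
            obtain ⟨q0, hq0⟩ := (hreach x hxS).symm.exists_walk_length_eq_dist
            cases q0 with
            | nil => exact absurd rfl hxr
            | @cons _ z _ hadj q =>
              obtain ⟨hxz, h, hhS, hhends⟩ := hadj
              change q.length + 1 = _ at hq0
              have hzd : G.dist r z + 1 ≤ G.dist r x := by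
                have h1 := SimpleGraph.dist_le q
                have h2 := SimpleGraph.dist_comm (G := G) (u := r) (v := z)
                have h3 := SimpleGraph.dist_comm (G := G) (u := r) (v := x)
                omega
              have hhg : h ≠ g := by
                rintro rfl
                rw [hgends] at hhends
                rcases Sym2.eq_iff.mp hhends with ⟨h1, h2⟩ | ⟨h1, h2⟩
                · exact hxu h1.symm
                · have h4 := hdle x hxS
                  rw [← h1] at hzd
                  omega
              have hxh : x ∈ ends h := by rw [hhends]; exact Sym2.mem_mk_left _ _
              refine hstep g h x hgS hhS (Ne.symm hhg) hxg hxh ?_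
              have hα : ∀ y, y ∈ SuppV ends S → G.dist r y + 1 ≤ d → y ≠ x →
                  (graphOf ends (S \ {g, h})).Reachable r y := by
                intro y hyS hyd hyx
                refine reach_avoid ends Finset.sdiff_subset (hreach y hyS) ?_
                intro e' he'S he'S₂
                have he'gh : e' = g ∨ e' = h := by
                  by_contra hcon
                  push_neg at hcon
                  exact he'S₂ (Finset.mem_sdiff.mpr ⟨he'S, by simp [hcon.1, hcon.2]⟩)
                right
                rcases he'gh with rfl | rfl
                · refine ⟨u₀, by rw [hgends]; exact Sym2.mem_mk_left _ _, ?_, by rw [← hGdef]; omega⟩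
                  rintro rfl
                  omega
                · exact ⟨x, hxh, Ne.symm hyx, by rw [← hGdef]; omega⟩
              have key : ∀ c ∈ SuppV ends (S \ {g, h}),
                  (graphOf ends (S \ {g, h})).Reachable r c := by
                intro c hc
                obtain ⟨e, heS₂, hce⟩ := hc
                obtain ⟨heS, hegh⟩ := Finset.mem_sdiff.mp heS₂
                have heg : e ≠ g := fun hc' => hegh (by simp [hc'])
                have heh : e ≠ h := fun hc' => hegh (by simp [hc'])
                have hcS : c ∈ SuppV ends S := ⟨e, heS, hce⟩
                by_cases hcd : G.dist r c + 1 ≤ d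
                · by_cases hcx : c = x
                  · subst hcx
                    obtain ⟨y', hy'⟩ := Sym2.mem_iff_exists.mp hce
                    have heIx : e ∈ I c := (hImem c e).mpr ⟨heS, hce⟩
                    have hy'x : y' ≠ c := by
                      rintro rfl
                      exact hii ⟨e, heIx, heg, hy'⟩
                    have hy'S : y' ∈ SuppV ends S :=
                      ⟨e, heS, by rw [hy']; exact Sym2.mem_mk_right _ _⟩
                    have hy'd : G.dist r y' + 1 ≤ d := by
                      have h1 := hdle y' hy'S
                      rcases Nat.lt_or_ge (G.dist r y') d with h2 | h2
                      · omega
                      · exfalso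
                        exact hi ⟨e, y', heIx, heg, hy'x, hy', by omega⟩
                    refine (hα y' hy'S hy'd hy'x).trans (SimpleGraph.Adj.reachable ?_)
                    refine ⟨hy'x, e, heS₂, ?_⟩
                    rw [hy']
                    exact Sym2.eq_swap
                  · exact hα c hcS hcd hcx
                · have hcd' : G.dist r c = d := by
                    have h1 := hdle c hcS
                    omega
                  obtain ⟨g', x', hg'I, hx'c, hg'ends, hx'd⟩ := hedge c hcS hcd'
                  have hg'e : g' = e := hM1 c hcS hcd' g' hg'I e ((hImem c e).mpr ⟨heS, hce⟩)
                  rw [hg'e] at hg'ends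
                  have hx'S : x' ∈ SuppV ends S :=
                    ⟨e, heS, by rw [hg'ends]; exact Sym2.mem_mk_right _ _⟩
                  have hcx : c ≠ x := by
                    rintro rfl
                    omega
                  have hx'x : x' ≠ x := by
                    rintro rfl
                    refine hi ⟨e, c, ?_, heg, hcx, ?_, hcd'⟩
                    · exact (hImem x' e).mpr ⟨heS, by rw [hg'ends]; exact Sym2.mem_mk_right _ _⟩
                    · rw [hg'ends]; exact Sym2.eq_swap
                  refine (hα x' hx'S hx'd hx'x).trans (SimpleGraph.Adj.reachable ?_)
                  refine ⟨hx'c, e, heS₂, ?_⟩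
                  rw [hg'ends]
                  exact Sym2.eq_swap
              intro a ha b hb
              exact (key a ha).symm.trans (key b hb)



lemma conn2_univ (ends : E → Sym2 V)
    (hG : ∀ a b : V, Relation.ReflTransGen (fun x y => ∃ e ∈ (Set.univ : Set E), ends e = s(x, y)) a b) :
    Conn2 ends (Finset.univ : Finset E) := by
  have key : ∀ a b : V,
      Relation.ReflTransGen (fun x y => ∃ e ∈ (Set.univ : Set E), ends e = s(x, y)) a b →
      (graphOf ends (Finset.univ : Finset E)).Reachable a b := by
    intro a b h
    induction h with
    | refl => exact SimpleGraph.Reachable.refl _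
    | @tail b' c hab hbc ih =>
      obtain ⟨e, -, hee⟩ := hbc
      by_cases hb'c : b' = c
      · exact hb'c ▸ ih
      · exact ih.trans (SimpleGraph.Adj.reachable ⟨hb'c, e, Finset.mem_univ e, hee⟩)
  exact fun a _ b _ => key a b (hG a b)

end OddEdgeAux

/-- a connected multigraph with an odd number of edges has a partition
of its edge set into pairs of adjacent edges plus exactly one unpaired edge. -/
theorem odd_edge_partition {V E : Type} [Fintype V] [Fintype E]
    (ends : E → Sym2 V) (hG : ConnOn ends Set.univ)
    (hodd : Odd (Fintype.card E)) :
    ∃ (P : Finset (E × E)) (e₀ : E),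
      (∀ p ∈ P, AdjPair ends p.1 p.2) ∧
      (∀ p ∈ P, ∀ q ∈ P, p ≠ q → p.1 ≠ q.1 ∧ p.1 ≠ q.2 ∧ p.2 ≠ q.1 ∧ p.2 ≠ q.2) ∧
      (∀ p ∈ P, e₀ ≠ p.1 ∧ e₀ ≠ p.2) ∧
      (∀ x : E, x ≠ e₀ → ∃ p ∈ P, x = p.1 ∨ x = p.2) := by
  classical
  have hconn := OddEdgeAux.conn2_univ ends (fun a b => hG a b)
  have hne : (Finset.univ : Finset E).Nonempty := by
    rw [← Finset.card_pos, Finset.card_univ]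
    obtain ⟨k, hk⟩ := hodd
    omega
  obtain ⟨P, R, hRsub, hRcard, hP⟩ :=
    OddEdgeAux.main_aux ends (Finset.univ : Finset E).card Finset.univ le_rfl hne hconn
  have hR1 : R.card = 1 := by
    rw [hRcard, Finset.card_univ]
    exact Nat.odd_iff.mp hodd
  obtain ⟨e₀, he₀⟩ := Finset.card_eq_one.mp hR1
  subst he₀
  obtain ⟨hadj, hdisj, hmem, hcov⟩ := hP
  refine ⟨P, e₀, hadj, hdisj, ?_, ?_⟩
  · intro p hp
    obtain ⟨h1, h2⟩ := hmem p hp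
    rw [Finset.mem_sdiff, Finset.mem_singleton] at h1 h2
    exact ⟨fun hc => h1.2 hc.symm, fun hc => h2.2 hc.symm⟩
  · intro x hx
    exact hcov x (by simp [hx])
end
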